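/- Let q >= 1 and epsilon > 0. For any random-cluster measure phi^xi_{G,p,q} on a finite graph G with p in [epsilon, 1 - epsilon] and any increasing event A, one has d/dp phi^xi_{G,p,q}(A) asymp sum over edges e in E of I^p_A(e), where the implicit constants depend only on q and epsilon. -/

import Mathlib

open scoped BigOperators

/-- Vertices of the square lattice `ℤ²`. -/
abbrev Vtx : Type := ℤ × ℤ

/-- Edges of the square lattice: unordered pairs of vertices. -/
abbrev Edge : Type := Sym2 Vtx

/-- Two vertices of `ℤ²` are adjacent when they are at euclidean distance 1. -/
def adjV (x y : Vtx) : Prop := |x.1 - y.1| + |x.2 - y.2| = 1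

instance (x y : Vtx) : Decidable (adjV x y) := by unfold adjV; infer_instance

/-- The set of lattice edges joining two vertices of `V` (the edge set of the subgraph of `ℤ²`
induced by `V`). -/
def edgeFinset (V : Finset Vtx) : Finset Edge :=
  ((V ×ˢ V).filter (fun xy => adjV xy.1 xy.2)).image (fun xy => s(xy.1, xy.2))

/-- Extend a configuration defined on the edges of a finite graph to all lattice edges,
declaring all other edges closed. -/
def extendConfig (E : Finset Edge) (ω : {e // e ∈ E} → Bool) : Edge → Bool :=
  fun e => if h : e ∈ E then ω ⟨e, h⟩ else false

/-- One connectivity step for the random-cluster model on the graph induced by `V`,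
with boundary condition (wiring relation) `ξ`: either an open edge of the graph,
or a wiring of the boundary condition. -/
def rcStep (V : Finset Vtx) (ξ : Vtx → Vtx → Prop) (ω : Edge → Bool) (x y : Vtx) : Prop :=
  (x ∈ V ∧ y ∈ V ∧ adjV x y ∧ ω s(x, y) = true) ∨ ξ x y

/-- The number `k(ω, ξ)` of connected components of the configuration `ω` on the graph induced
by `V`, where boundary vertices are additionally wired according to `ξ`. -/
noncomputable def clusterCount (V : Finset Vtx) (ξ : Vtx → Vtx → Prop) (ω : Edge → Bool) : ℕ :=
  Set.ncard {C : Set Vtx | ∃ x ∈ V, C = {y | y ∈ V ∧ Relation.ReflTransGen (rcStep V ξ ω) x y}}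

/-- The random-cluster weight `p^{#open} (1-p)^{#closed} q^{k(ω,ξ)}` of a configuration on the
graph induced by `V`. -/
noncomputable def rcWeight (V : Finset Vtx) (ξ : Vtx → Vtx → Prop) (p q : ℝ)
    (ω : {e // e ∈ edgeFinset V} → Bool) : ℝ :=
  p ^ (Finset.univ.filter (fun e => ω e = true)).card *
    (1 - p) ^ (Finset.univ.filter (fun e => ω e = false)).card *
    q ^ clusterCount V ξ (extendConfig (edgeFinset V) ω)

open Classical in
/-- The probability of the event `A` under the random-cluster measure `φ^ξ_{V,p,q}` on the
graph induced by `V`, with boundary condition `ξ`.  Events are read on the configuration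
extended (by closed edges) to the whole lattice. -/
noncomputable def rcProb (V : Finset Vtx) (ξ : Vtx → Vtx → Prop) (p q : ℝ)
    (A : (Edge → Bool) → Prop) : ℝ :=
  (∑ ω : {e // e ∈ edgeFinset V} → Bool,
      if A (extendConfig (edgeFinset V) ω) then rcWeight V ξ p q ω else 0) /
    ∑ ω : {e // e ∈ edgeFinset V} → Bool, rcWeight V ξ p q ω

/-- The inner boundary of `V`: vertices of `V` adjacent to some vertex outside `V`. -/
def innerBoundary (V : Finset Vtx) : Set Vtx := {x | x ∈ V ∧ ∃ y : Vtx, adjV x y ∧ y ∉ V}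

/-- A boundary condition on the graph induced by `V` is (the wiring relation of) a partition
of the inner boundary of `V`. -/
def IsBoundaryCondition (V : Finset Vtx) (ξ : Vtx → Vtx → Prop) : Prop :=
  Symmetric ξ ∧ Transitive ξ ∧ ∀ x y : Vtx, ξ x y → x ∈ innerBoundary V ∧ y ∈ innerBoundary V

/-- The free boundary condition: no wirings. -/
def freeBC : Vtx → Vtx → Prop := fun _ _ => False

/-- The wired boundary condition: all boundary vertices are pairwise wired. -/
def wiredBC (V : Finset Vtx) : Vtx → Vtx → Prop :=
  fun x y => x ∈ innerBoundary V ∧ y ∈ innerBoundary V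

/-- `x` and `y` are connected by an open path of `ω` staying in the vertex set `S`. -/
def openConnOn (S : Set Vtx) (ω : Edge → Bool) (x y : Vtx) : Prop :=
  Relation.ReflTransGen (fun a b => a ∈ S ∧ b ∈ S ∧ adjV a b ∧ ω s(a, b) = true) x y

/-- The vertices of the lattice rectangle `[x0, x1] × [y0, y1]`. -/
noncomputable def rectV (x0 x1 y0 y1 : ℤ) : Finset Vtx := Finset.Icc x0 x1 ×ˢ Finset.Icc y0 y1

/-- The event that the rectangle `[x0, x1] × [y0, y1]` is crossed vertically by an open path
(from its bottom side to its top side). -/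
def CrossV (x0 x1 y0 y1 : ℤ) (ω : Edge → Bool) : Prop :=
  ∃ a b : Vtx, a ∈ (rectV x0 x1 y0 y1 : Set Vtx) ∧ b ∈ (rectV x0 x1 y0 y1 : Set Vtx) ∧
    a.2 = y0 ∧ b.2 = y1 ∧ openConnOn (rectV x0 x1 y0 y1 : Set Vtx) ω a b

/-- The event that the rectangle `[x0, x1] × [y0, y1]` is crossed horizontally by an open path
(from its left side to its right side). -/
def CrossH (x0 x1 y0 y1 : ℤ) (ω : Edge → Bool) : Prop :=
  ∃ a b : Vtx, a ∈ (rectV x0 x1 y0 y1 : Set Vtx) ∧ b ∈ (rectV x0 x1 y0 y1 : Set Vtx) ∧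
    a.1 = x0 ∧ b.1 = x1 ∧ openConnOn (rectV x0 x1 y0 y1 : Set Vtx) ω a b

/-- The critical point `p_c(2) = √2 / (1 + √2)` of the FK-Ising model. -/
noncomputable def pcIsing : ℝ := Real.sqrt 2 / (1 + Real.sqrt 2)
/-- The event that the edge `e` is open. -/
def edgeOpen (e : Edge) (ω : Edge → Bool) : Prop := ω e = true

/-- The (conditional) influence of the edge `e` on the event `A`:
`I_A^p(e) = φ^ξ_{G,p,q}(A | e open) - φ^ξ_{G,p,q}(A | e closed)`. -/
noncomputable def influence (V : Finset Vtx) (ξ : Vtx → Vtx → Prop) (p q : ℝ)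
    (A : (Edge → Bool) → Prop) (e : Edge) : ℝ :=
  rcProb V ξ p q (fun ω => A ω ∧ ω e = true) / rcProb V ξ p q (fun ω => ω e = true) -
    rcProb V ξ p q (fun ω => A ω ∧ ω e = false) / rcProb V ξ p q (fun ω => ω e = false)

/-- An event is increasing if it is preserved by the addition of open edges. -/
def IncreasingEvent (A : (Edge → Bool) → Prop) : Prop :=
  ∀ ω ω' : Edge → Bool, (∀ e : Edge, ω e = true → ω' e = true) → A ω → A ω'


/-!
Differentiating the weight `p ^ o(ω) * (1 - p) ^ c(ω) * q ^ k(ω)` term by term gives Russo's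
formula `d/dp φ(A) = ∑ₑ Cov(1_A, ωₑ) / (p (1 - p))`, while the influence is
`I_A(e) = Cov(1_A, ωₑ) / (πₑ (1 - πₑ))` with `πₑ = φ(ωₑ)`. Opening an edge lowers `k` by `0` or
`1`, so `p / (p + q (1 - p)) ≤ πₑ ≤ p` (finite energy) and `πₑ (1 - πₑ)` is within a factor `q`
of `p (1 - p)`. The cluster count is supermodular, so the weight satisfies the FKG lattice
condition and the covariances are nonnegative; hence `c = q⁻¹` works.
-/

open Finset Relation Function

theorem Set.ncard_image_add_one_of_injOn_sdiff {β γ : Type*} {S : Set β} (hS : S.Finite)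
    {f : β → γ} {a b : β} (ha : a ∈ S) (hb : b ∈ S) (hab : a ≠ b) (hf : f a = f b)
    (hinj : Set.InjOn f (S \ {a})) : (f '' S).ncard + 1 = S.ncard := by
  have hfb : f a ∈ f '' (S \ {a}) := hf ▸ Set.mem_image_of_mem f ⟨hb, hab.symm⟩
  rw [← Set.insert_sdiff_self_of_mem ha, Set.image_insert_eq, Set.insert_eq_of_mem hfb,
    hinj.ncard_image, Set.insert_sdiff_self_of_mem ha,
    Set.ncard_sdiff_singleton_add_one ha hS]

namespace Relation

variable {α : Type*} {r s : α → α → Prop} {u v x y : α}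

def link (u v : α) : α → α → Prop := fun a b => a = u ∧ b = v ∨ a = v ∧ b = u

theorem link_comm : link u v = link v u := by
  funext a b
  exact propext or_comm

theorem reflTransGen_sup_link_iff :
    ReflTransGen (r ⊔ link u v) x y ↔ ReflTransGen r x y ∨
      ReflTransGen r x u ∧ ReflTransGen r v y ∨ ReflTransGen r x v ∧ ReflTransGen r u y := by
  constructor
  · intro h
    induction h with
    | refl => exact .inl .refl
    | tail _ hstep ih =>
      rcases hstep with hr | ⟨rfl, rfl⟩ | ⟨rfl, rfl⟩
      · rcases ih with h | ⟨h₁, h₂⟩ | ⟨h₁, h₂⟩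
        exacts [.inl (h.tail hr), .inr (.inl ⟨h₁, h₂.tail hr⟩), .inr (.inr ⟨h₁, h₂.tail hr⟩)]
      · rcases ih with h | ⟨h, -⟩ | ⟨h, -⟩
        exacts [.inr (.inl ⟨h, .refl⟩), .inr (.inl ⟨h, .refl⟩), .inl h]
      · rcases ih with h | ⟨h, -⟩ | ⟨h, -⟩
        exacts [.inr (.inr ⟨h, .refl⟩), .inl h, .inr (.inr ⟨h, .refl⟩)]
  · have hle : ReflTransGen r ≤ ReflTransGen (r ⊔ link u v) := ReflTransGen.mono le_sup_left
    have huv : ReflTransGen (r ⊔ link u v) u v := .single (.inr (.inl ⟨rfl, rfl⟩))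
    have hvu : ReflTransGen (r ⊔ link u v) v u := .single (.inr (.inr ⟨rfl, rfl⟩))
    rintro (h | ⟨h₁, h₂⟩ | ⟨h₁, h₂⟩)
    exacts [hle _ _ h, ((hle _ _ h₁).trans huv).trans (hle _ _ h₂),
      ((hle _ _ h₁).trans hvu).trans (hle _ _ h₂)]

theorem reflTransGen_sup_link_of_reflTransGen [Std.Symm r] (h : ReflTransGen r u v) :
    ReflTransGen (r ⊔ link u v) = ReflTransGen r := by
  refine le_antisymm (reflTransGen_closed ?_) (ReflTransGen.mono le_sup_left)
  rintro a b (hr | ⟨rfl, rfl⟩ | ⟨rfl, rfl⟩)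
  exacts [.single hr, h, Std.Symm.symm _ _ h]

def vertexClass (V : Finset α) (r : α → α → Prop) (x : α) : Set α :=
  {y | y ∈ V ∧ ReflTransGen r x y}

noncomputable def classCount (V : Finset α) (r : α → α → Prop) : ℕ :=
  Set.ncard {C : Set α | ∃ x ∈ V, C = vertexClass V r x}

variable {V : Finset α}

theorem classCount_eq_ncard_image : classCount V r = (vertexClass V r '' V).ncard := by
  simp only [classCount, Set.image, eq_comm, Finset.mem_coe]

theorem vertexClass_eq_of_reflTransGen [Std.Symm r] (h : ReflTransGen r x y) :
    vertexClass V r x = vertexClass V r y :=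
  Set.ext fun _ => and_congr_right fun _ =>
    ⟨(Std.Symm.symm _ _ h).trans, h.trans⟩

theorem mem_vertexClass (hy : y ∈ V) : y ∈ vertexClass V r x ↔ ReflTransGen r x y :=
  and_iff_right hy

theorem vertexClass_sup_link_of_left [Std.Symm r] (hx : ReflTransGen r x u) :
    vertexClass V (r ⊔ link u v) x = vertexClass V r u ∪ vertexClass V r v := by
  ext y
  simp only [vertexClass, reflTransGen_sup_link_iff, Set.mem_union, Set.mem_ofPred_eq]
  have hux := Std.Symm.symm _ _ hx
  constructor
  · rintro ⟨hy, h | ⟨-, h⟩ | ⟨-, h⟩⟩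
    exacts [.inl ⟨hy, hux.trans h⟩, .inr ⟨hy, h⟩, .inl ⟨hy, h⟩]
  · rintro (⟨hy, h⟩ | ⟨hy, h⟩)
    exacts [⟨hy, .inl (hx.trans h)⟩, ⟨hy, .inr (.inl ⟨hx, h⟩)⟩]

theorem vertexClass_sup_link_of_not (hu : ¬ReflTransGen r x u) (hv : ¬ReflTransGen r x v) :
    vertexClass V (r ⊔ link u v) x = vertexClass V r x := by
  ext y
  simp only [vertexClass, reflTransGen_sup_link_iff, Set.mem_ofPred_eq, hu, hv, false_and,
    or_false]

theorem classCount_sup_link_add_one [Std.Symm r] (hu : u ∈ V) (hv : v ∈ V)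
    (h : ¬ReflTransGen r u v) : classCount V (r ⊔ link u v) + 1 = classCount V r := by
  classical
  set cls := vertexClass V r
  let merge : Set α → Set α := fun C => if u ∈ C ∨ v ∈ C then cls u ∪ cls v else C
  have hmerge : vertexClass V (r ⊔ link u v) = merge ∘ cls := by
    funext x
    by_cases hxu : ReflTransGen r x u
    · simp [merge, cls, mem_vertexClass hu, hxu, vertexClass_sup_link_of_left hxu]
    by_cases hxv : ReflTransGen r x v
    · rw [link_comm, vertexClass_sup_link_of_left hxv, Set.union_comm]
      simp [merge, cls, mem_vertexClass hv, hxv]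
    · simp [merge, cls, mem_vertexClass hu, mem_vertexClass hv, hxu, hxv,
        vertexClass_sup_link_of_not hxu hxv]
  have hu_cls : ∀ x, u ∈ cls x → cls x = cls u := fun x hx =>
    vertexClass_eq_of_reflTransGen ((mem_vertexClass hu).1 hx)
  have hv_cls : ∀ x, v ∈ cls x → cls x = cls v := fun x hx =>
    vertexClass_eq_of_reflTransGen ((mem_vertexClass hv).1 hx)
  have hne : cls u ≠ cls v := fun huv => by
    have hvu : v ∈ cls u := huv ▸ (mem_vertexClass hv).2 .refl
    exact h ((mem_vertexClass hv).1 hvu)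
  have hmerge_eq : merge (cls u) = merge (cls v) := by
    simp [merge, cls, mem_vertexClass hu, mem_vertexClass hv, ReflTransGen.refl]
  rw [classCount_eq_ncard_image, classCount_eq_ncard_image, hmerge, Set.image_comp]
  refine Set.ncard_image_add_one_of_injOn_sdiff (V.finite_toSet.image cls)
    (Set.mem_image_of_mem cls hu) (Set.mem_image_of_mem cls hv) hne hmerge_eq ?_
  rintro _ ⟨⟨x, -, rfl⟩, hx⟩ _ ⟨⟨y, -, rfl⟩, hy⟩ hxy
  have hux : u ∉ cls x := fun h' => hx (hu_cls x h')
  have huy : u ∉ cls y := fun h' => hy (hu_cls y h')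
  by_cases hvx : v ∈ cls x <;> by_cases hvy : v ∈ cls y <;>
    simp only [merge, hux, huy, hvx, hvy, false_or, if_true, if_false] at hxy
  · rw [hv_cls x hvx, hv_cls y hvy]
  · exact absurd (hxy ▸ Or.inl ((mem_vertexClass hu).2 .refl)) huy
  · exact absurd (hxy ▸ Or.inl ((mem_vertexClass hu).2 .refl)) hux
  · exact hxy

theorem classCount_sup_link_of_reflTransGen [Std.Symm r] (h : ReflTransGen r u v) :
    classCount V (r ⊔ link u v) = classCount V r := by
  simp only [classCount, vertexClass, reflTransGen_sup_link_of_reflTransGen h]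

theorem classCount_sup_link_le [Std.Symm r] (hu : u ∈ V) (hv : v ∈ V) :
    classCount V (r ⊔ link u v) ≤ classCount V r ∧
      classCount V r ≤ classCount V (r ⊔ link u v) + 1 := by
  by_cases h : ReflTransGen r u v
  · rw [classCount_sup_link_of_reflTransGen h]
    omega
  · have := classCount_sup_link_add_one hu hv h
    omega

theorem classCount_sup_link_add_le [Std.Symm r] [Std.Symm s] (hrs : r ≤ s) (hu : u ∈ V)
    (hv : v ∈ V) :
    classCount V (r ⊔ link u v) + classCount V s ≤
      classCount V (s ⊔ link u v) + classCount V r := by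
  by_cases h : ReflTransGen s u v
  · rw [classCount_sup_link_of_reflTransGen h]
    have := (classCount_sup_link_le (r := r) hu hv).1
    omega
  · have hr : ¬ReflTransGen r u v := fun h' => h (ReflTransGen.mono hrs _ _ h')
    have := classCount_sup_link_add_one hu hv h
    have := classCount_sup_link_add_one hu hv hr
    omega

end Relation

theorem add_le_sup_add_inf_of_update {ι M : Type*} [Fintype ι] [DecidableEq ι]
    [AddCommMonoid M] [PartialOrder M] [IsOrderedCancelAddMonoid M] {f : (ι → Bool) → M}
    (hf : ∀ a b : ι → Bool, a ≤ b → ∀ i, f (update a i true) + f b ≤ f (update b i true) + f a)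
    (ω η : ι → Bool) : f ω + f η ≤ f (ω ⊔ η) + f (ω ⊓ η) := by
  let openOn (F : Finset ι) (a : ι → Bool) : ι → Bool := fun i => decide (i ∈ F) || a i
  have key : ∀ F : Finset ι, ∀ a b : ι → Bool, a ≤ b →
      f (openOn F a) + f b ≤ f (openOn F b) + f a := by
    intro F a b hab
    induction F using Finset.induction_on with
    | empty => simp [openOn, add_comm]
    | insert j F _ ih =>
      have hupd : ∀ c, openOn (insert j F) c = update (openOn F c) j true := fun c => by
        funext i
        by_cases hi : i = j <;> simp [openOn, hi]
      have hle : openOn F a ≤ openOn F b := fun i => by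
        by_cases hi : i ∈ F
        · simp [openOn, hi]
        · simpa [openOn, hi] using hab i
      rw [hupd, hupd]
      exact le_of_add_le_add_right (a := f (openOn F a) + f (openOn F b)) <| by
        calc _ = (f (update (openOn F a) j true) + f (openOn F b)) + (f (openOn F a) + f b) := by
                abel
          _ ≤ (f (update (openOn F b) j true) + f (openOn F a)) + (f (openOn F b) + f a) :=
                add_le_add (hf _ _ hle j) ih
          _ = _ := by abel
  -- opening the edges of `ω` turns `ω ⊓ η` into `ω` and `η` into `ω ⊔ η`
  have h := key (univ.filter fun i => ω i = true) (ω ⊓ η) η inf_le_right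
  convert h using 3 <;> funext i <;> cases hω : ω i <;> cases η i <;> simp [openOn, hω]

section TiltedBernoulli

variable {ι : Type*} [Fintype ι] {p q : ℝ} {c : (ι → Bool) → ℝ}
  {P Q : (ι → Bool) → Prop}

def numOpen (ω : ι → Bool) : ℕ := (univ.filter fun i => ω i = true).card

def numClosed (ω : ι → Bool) : ℕ := (univ.filter fun i => ω i = false).card

noncomputable def bernoulliWeight (p : ℝ) (ω : ι → Bool) : ℝ :=
  p ^ numOpen ω * (1 - p) ^ numClosed ω

theorem numOpen_add_numClosed (ω : ι → Bool) : numOpen ω + numClosed ω = Fintype.card ι := by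
  simpa [numOpen, numClosed] using Finset.card_filter_add_card_filter_not (s := univ)
    (fun i => ω i = true)

theorem cast_numOpen (ω : ι → Bool) : (numOpen ω : ℝ) = ∑ i, if ω i = true then 1 else 0 := by
  rw [numOpen, Finset.card_filter]
  push_cast
  rfl

theorem bernoulliWeight_nonneg (hp0 : 0 ≤ p) (hp1 : p ≤ 1) (ω : ι → Bool) :
    0 ≤ bernoulliWeight p ω :=
  mul_nonneg (pow_nonneg hp0 _) (pow_nonneg (sub_nonneg.2 hp1) _)

theorem bernoulliWeight_pos (hp0 : 0 < p) (hp1 : p < 1) (ω : ι → Bool) :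
    0 < bernoulliWeight p ω :=
  mul_pos (pow_pos hp0 _) (pow_pos (sub_pos.2 hp1) _)

theorem hasDerivAt_bernoulliWeight (hp0 : p ≠ 0) (hp1 : p ≠ 1) (ω : ι → Bool) :
    HasDerivAt (fun x => bernoulliWeight x ω)
      (bernoulliWeight p ω * (numOpen ω - Fintype.card ι * p) / (p * (1 - p))) p := by
  have hpow : ∀ (n : ℕ) (x : ℝ), (n : ℝ) * x ^ (n - 1) * x = n * x ^ n := by
    rintro (_ | n) x
    · simp
    · rw [Nat.add_sub_cancel, pow_succ]; ring
  refine ((hasDerivAt_pow (numOpen ω) p).mul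
    (((hasDerivAt_id p).const_sub 1).fun_pow (numClosed ω))).congr_deriv ?_
  rw [eq_div_iff (mul_ne_zero hp0 (sub_ne_zero.2 (Ne.symm hp1))), ← numOpen_add_numClosed ω]
  simp only [bernoulliWeight, id, Nat.cast_add]
  linear_combination ((1 - p) ^ numClosed ω * (1 - p)) * hpow (numOpen ω) p -
    (p ^ numOpen ω * p) * hpow (numClosed ω) (1 - p)

variable [DecidableEq ι]

noncomputable def tiltedWeight (p : ℝ) (c : (ι → Bool) → ℝ) (ω : ι → Bool) : ℝ :=
  bernoulliWeight p ω * c ω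

open Classical in
noncomputable def tiltedMass (p : ℝ) (c : (ι → Bool) → ℝ) (P : (ι → Bool) → Prop) : ℝ :=
  ∑ ω, if P ω then tiltedWeight p c ω else 0

noncomputable def tiltedProb (p : ℝ) (c : (ι → Bool) → ℝ) (P : (ι → Bool) → Prop) : ℝ :=
  tiltedMass p c P / ∑ ω, tiltedWeight p c ω

noncomputable def tiltedInfluence (p : ℝ) (c : (ι → Bool) → ℝ) (P : (ι → Bool) → Prop)
    (i : ι) : ℝ :=
  tiltedProb p c (fun ω => P ω ∧ ω i = true) / tiltedProb p c (fun ω => ω i = true) -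
    tiltedProb p c (fun ω => P ω ∧ ω i = false) / tiltedProb p c (fun ω => ω i = false)

theorem sum_tiltedWeight_pos (hp0 : 0 < p) (hp1 : p < 1) (hc : ∀ ω, 0 < c ω) :
    0 < ∑ ω, tiltedWeight p c ω :=
  Finset.sum_pos (fun ω _ => mul_pos (bernoulliWeight_pos hp0 hp1 ω) (hc ω)) univ_nonempty

open Classical in
theorem sum_tiltedMass_and_eq_true (p : ℝ) (c : (ι → Bool) → ℝ) (P : (ι → Bool) → Prop) :
    ∑ i, tiltedMass p c (fun ω => P ω ∧ ω i = true) =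
      ∑ ω, if P ω then (numOpen ω : ℝ) * tiltedWeight p c ω else 0 := by
  simp only [tiltedMass]
  rw [Finset.sum_comm]
  refine Finset.sum_congr rfl fun ω _ => ?_
  by_cases hP : P ω
  · simp only [hP, true_and, if_true, cast_numOpen, Finset.sum_mul, ite_mul, one_mul, zero_mul]
  · simp [hP]

theorem hasDerivAt_tiltedMass (hp0 : p ≠ 0) (hp1 : p ≠ 1) (c : (ι → Bool) → ℝ)
    (P : (ι → Bool) → Prop) :
    HasDerivAt (fun x => tiltedMass x c P)
      ((∑ i, tiltedMass p c (fun ω => P ω ∧ ω i = true) -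
        Fintype.card ι * p * tiltedMass p c P) / (p * (1 - p))) p := by
  classical
  have h : HasDerivAt (fun x => tiltedMass x c P) (∑ ω, if P ω then
      bernoulliWeight p ω * (numOpen ω - Fintype.card ι * p) / (p * (1 - p)) * c ω else 0) p := by
    refine HasDerivAt.fun_sum fun ω _ => ?_
    split_ifs
    · exact (hasDerivAt_bernoulliWeight hp0 hp1 ω).mul_const (c ω)
    · exact hasDerivAt_const _ _
  convert h using 1
  rw [sum_tiltedMass_and_eq_true, tiltedMass, Finset.mul_sum, ← Finset.sum_sub_distrib,
    Finset.sum_div]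
  refine Finset.sum_congr rfl fun ω _ => ?_
  split_ifs
  · simp only [tiltedWeight]; ring
  · simp

theorem tiltedMass_true (p : ℝ) (c : (ι → Bool) → ℝ) :
    tiltedMass p c (fun _ => True) = ∑ ω, tiltedWeight p c ω := by
  simp [tiltedMass]

theorem hasDerivAt_tiltedProb (hp0 : 0 < p) (hp1 : p < 1) (hc : ∀ ω, 0 < c ω)
    (P : (ι → Bool) → Prop) :
    HasDerivAt (fun x => tiltedProb x c P)
      (∑ i, (tiltedProb p c (fun ω => P ω ∧ ω i = true) -
        tiltedProb p c P * tiltedProb p c (fun ω => ω i = true)) / (p * (1 - p))) p := by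
  have hZ := sum_tiltedWeight_pos hp0 hp1 hc
  have hT := hasDerivAt_tiltedMass hp0.ne' hp1.ne c (fun _ => True)
  simp only [tiltedMass_true, true_and] at hT
  refine ((hasDerivAt_tiltedMass hp0.ne' hp1.ne c P).div hT hZ.ne').congr_deriv ?_
  have hpq : p * (1 - p) ≠ 0 := mul_ne_zero hp0.ne' (sub_pos.2 hp1).ne'
  simp only [tiltedProb]
  set Z := ∑ ω, tiltedWeight p c ω
  have hterm : ∀ i, (tiltedMass p c (fun ω => P ω ∧ ω i = true) / Z -
      tiltedMass p c P / Z * (tiltedMass p c (fun ω => ω i = true) / Z)) / (p * (1 - p)) =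
      (tiltedMass p c (fun ω => P ω ∧ ω i = true) * Z -
        tiltedMass p c P * tiltedMass p c (fun ω => ω i = true)) / (p * (1 - p) * Z ^ 2) := by
    intro i
    field_simp
  rw [Finset.sum_congr rfl fun i _ => hterm i, ← Finset.sum_div, Finset.sum_sub_distrib,
    ← Finset.sum_mul, ← Finset.mul_sum]
  field_simp
  ring

theorem tiltedProb_and_true_add_and_false (p : ℝ) (c : (ι → Bool) → ℝ) (P : (ι → Bool) → Prop)
    (i : ι) :
    tiltedProb p c (fun ω => P ω ∧ ω i = true) + tiltedProb p c (fun ω => P ω ∧ ω i = false) =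
      tiltedProb p c P := by
  simp only [tiltedProb, tiltedMass, ← add_div, ← Finset.sum_add_distrib]
  congr 1
  refine Finset.sum_congr rfl fun ω _ => ?_
  rcases Bool.eq_false_or_eq_true (ω i) with h | h <;> by_cases hP : P ω <;> simp [hP, h]

theorem tiltedProb_true (hZ : ∑ ω, tiltedWeight p c ω ≠ 0) :
    tiltedProb p c (fun _ => True) = 1 := by
  rw [tiltedProb, tiltedMass_true, div_self hZ]

theorem tiltedInfluence_eq (hZ : ∑ ω, tiltedWeight p c ω ≠ 0) (i : ι)
    (h0 : tiltedProb p c (fun ω => ω i = true) ≠ 0)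
    (h1 : tiltedProb p c (fun ω => ω i = true) ≠ 1) :
    tiltedInfluence p c P i =
      (tiltedProb p c (fun ω => P ω ∧ ω i = true) -
          tiltedProb p c P * tiltedProb p c (fun ω => ω i = true)) /
        (tiltedProb p c (fun ω => ω i = true) * (1 - tiltedProb p c (fun ω => ω i = true))) := by
  have hP := tiltedProb_and_true_add_and_false p c P i
  have hT := tiltedProb_and_true_add_and_false p c (fun _ => True) i
  simp only [true_and, tiltedProb_true hZ] at hT
  rw [tiltedInfluence, eq_sub_of_add_eq' hP, eq_sub_of_add_eq' hT]
  have h1' : 1 - tiltedProb p c (fun ω => ω i = true) ≠ 0 := sub_ne_zero.2 (Ne.symm h1)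
  field_simp
  ring

theorem bernoulliWeight_mul_bernoulliWeight (p : ℝ) (ω η : ι → Bool) :
    bernoulliWeight p ω * bernoulliWeight p η =
      bernoulliWeight p (ω ⊓ η) * bernoulliWeight p (ω ⊔ η) := by
  have hopen : numOpen ω + numOpen η = numOpen (ω ⊓ η) + numOpen (ω ⊔ η) := by
    rw [numOpen, numOpen, ← Finset.card_union_add_card_inter, add_comm]
    congr 2 <;> ext i <;> simp
  have hclosed : numClosed ω + numClosed η = numClosed (ω ⊓ η) + numClosed (ω ⊔ η) := by
    rw [numClosed, numClosed, ← Finset.card_union_add_card_inter]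
    congr 2 <;> ext i <;> cases h₁ : ω i <;> cases h₂ : η i <;> simp [h₁, h₂]
  simp only [bernoulliWeight]
  rw [mul_mul_mul_comm, ← pow_add, ← pow_add, hopen, hclosed, pow_add, pow_add]
  ring

theorem tiltedWeight_mul_tiltedWeight_le (hp0 : 0 ≤ p) (hp1 : p ≤ 1)
    (hc : ∀ ω η, c ω * c η ≤ c (ω ⊓ η) * c (ω ⊔ η)) (ω η : ι → Bool) :
    tiltedWeight p c ω * tiltedWeight p c η ≤
      tiltedWeight p c (ω ⊓ η) * tiltedWeight p c (ω ⊔ η) := by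
  have hb := mul_nonneg (bernoulliWeight_nonneg hp0 hp1 (ω ⊓ η))
    (bernoulliWeight_nonneg hp0 hp1 (ω ⊔ η))
  calc tiltedWeight p c ω * tiltedWeight p c η
      = bernoulliWeight p (ω ⊓ η) * bernoulliWeight p (ω ⊔ η) * (c ω * c η) := by
        rw [← bernoulliWeight_mul_bernoulliWeight, tiltedWeight, tiltedWeight]; ring
    _ ≤ bernoulliWeight p (ω ⊓ η) * bernoulliWeight p (ω ⊔ η) * (c (ω ⊓ η) * c (ω ⊔ η)) :=
        mul_le_mul_of_nonneg_left (hc ω η) hb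
    _ = _ := by rw [tiltedWeight, tiltedWeight]; ring

theorem tiltedProb_mul_le_tiltedProb_and (hp0 : 0 ≤ p) (hp1 : p ≤ 1) (hc0 : ∀ ω, 0 ≤ c ω)
    (hc : ∀ ω η, c ω * c η ≤ c (ω ⊓ η) * c (ω ⊔ η)) (hP : Monotone P) (hQ : Monotone Q) :
    tiltedProb p c P * tiltedProb p c Q ≤ tiltedProb p c (fun ω => P ω ∧ Q ω) := by
  classical
  have hw : 0 ≤ tiltedWeight p c := fun ω => mul_nonneg (bernoulliWeight_nonneg hp0 hp1 ω) (hc0 ω)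
  have hmass : ∀ (R : (ι → Bool) → Prop) [DecidablePred R],
      tiltedMass p c R = ∑ ω, tiltedWeight p c ω * if R ω then 1 else 0 := fun R _ => by
    simp only [tiltedMass, mul_ite, mul_one, mul_zero]
    congr!
  have hind : ∀ R : (ι → Bool) → Prop, Monotone R →
      Monotone fun ω => if R ω then (1 : ℝ) else 0 := fun R hR ω η h => by
    by_cases hω : R ω
    · simp [hω, hR h hω]
    · simp only [hω, if_false]
      split_ifs <;> norm_num
  have hfkg := fkg (f := fun ω => if P ω then (1 : ℝ) else 0)
    (g := fun ω => if Q ω then (1 : ℝ) else 0) (μ := tiltedWeight p c) hw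
    (fun ω => by dsimp; split_ifs <;> norm_num) (fun ω => by dsimp; split_ifs <;> norm_num)
    (hind P hP) (hind Q hQ) (tiltedWeight_mul_tiltedWeight_le hp0 hp1 hc)
  simp only [ite_zero_mul_ite_zero, mul_one, ← hmass] at hfkg
  rcases (Fintype.sum_nonneg hw).eq_or_lt with hZ | hZ
  · simp [tiltedProb, ← hZ]
  · rw [tiltedProb, tiltedProb, tiltedProb, div_mul_div_comm, div_le_div_iff₀ (by positivity) hZ]
    nlinarith

theorem bernoulliWeight_update_true {ω : ι → Bool} {i : ι} (h : ω i = false) (p : ℝ) :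
    (1 - p) * bernoulliWeight p (update ω i true) = p * bernoulliWeight p ω := by
  have hopen : numOpen (update ω i true) = numOpen ω + 1 := by
    rw [numOpen, numOpen, ← Finset.card_insert_of_notMem (a := i) (by simp [h])]
    congr 1
    ext j
    by_cases hj : j = i <;> simp [hj]
  have hclosed : numClosed ω = numClosed (update ω i true) + 1 := by
    rw [numClosed, numClosed, ← Finset.card_insert_of_notMem (a := i) (by simp)]
    congr 1
    ext j
    by_cases hj : j = i <;> simp [hj, h]
  simp only [bernoulliWeight, hopen, hclosed, pow_succ]
  ring

theorem tiltedMass_eq_true (p : ℝ) (c : (ι → Bool) → ℝ) (i : ι) :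
    tiltedMass p c (fun ω => ω i = true) =
      ∑ ω, if ω i = false then tiltedWeight p c (update ω i true) else 0 := by
  let flip : Equiv.Perm (ι → Bool) := Function.Involutive.toPerm (fun ω => update ω i !ω i)
    fun ω => by ext j; by_cases hj : j = i <;> simp [hj]
  have hflip : ∀ ω, flip ω = update ω i !ω i := fun _ => rfl
  rw [tiltedMass, ← Equiv.sum_comp flip]
  refine Finset.sum_congr rfl fun ω _ => ?_
  cases h : ω i <;> simp [hflip, h]

theorem tiltedMass_eq_false (p : ℝ) (c : (ι → Bool) → ℝ) (i : ι) :
    tiltedMass p c (fun ω => ω i = false) =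
      ∑ ω, if ω i = false then tiltedWeight p c ω else 0 := by
  simp only [tiltedMass]
  congr!

theorem tiltedWeight_finite_energy (hp0 : 0 ≤ p) (hp1 : p ≤ 1)
    (hc : ∀ ω i, c (update ω i true) ≤ c ω ∧ c ω ≤ q * c (update ω i true)) {ω : ι → Bool}
    {i : ι} (h : ω i = false) :
    (1 - p) * tiltedWeight p c (update ω i true) ≤ p * tiltedWeight p c ω ∧
      p * tiltedWeight p c ω ≤ q * (1 - p) * tiltedWeight p c (update ω i true) := by
  have key := bernoulliWeight_update_true h p
  have hb := mul_nonneg hp0 (bernoulliWeight_nonneg hp0 hp1 ω)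
  obtain ⟨h₁, h₂⟩ := hc ω i
  simp only [tiltedWeight]
  constructor
  · calc _ = p * bernoulliWeight p ω * c (update ω i true) := by
          linear_combination c (update ω i true) * key
      _ ≤ p * bernoulliWeight p ω * c ω := mul_le_mul_of_nonneg_left h₁ hb
      _ = _ := by ring
  · calc _ = p * bernoulliWeight p ω * c ω := by ring
      _ ≤ p * bernoulliWeight p ω * (q * c (update ω i true)) := mul_le_mul_of_nonneg_left h₂ hb
      _ = _ := by linear_combination (-(q * c (update ω i true))) * key

theorem tiltedMass_finite_energy (hp0 : 0 ≤ p) (hp1 : p ≤ 1)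
    (hc : ∀ ω i, c (update ω i true) ≤ c ω ∧ c ω ≤ q * c (update ω i true)) (i : ι) :
    (1 - p) * tiltedMass p c (fun ω => ω i = true) ≤ p * tiltedMass p c (fun ω => ω i = false) ∧
      p * tiltedMass p c (fun ω => ω i = false) ≤
        q * (1 - p) * tiltedMass p c (fun ω => ω i = true) := by
  rw [tiltedMass_eq_true, tiltedMass_eq_false, Finset.mul_sum, Finset.mul_sum, Finset.mul_sum]
  constructor <;> refine Finset.sum_le_sum fun ω _ => ?_ <;> split_ifs with h
  exacts [(tiltedWeight_finite_energy hp0 hp1 hc h).1, by simp,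
    (tiltedWeight_finite_energy hp0 hp1 hc h).2, by simp]

theorem tiltedProb_finite_energy (hp0 : 0 ≤ p) (hp1 : p ≤ 1)
    (hc : ∀ ω i, c (update ω i true) ≤ c ω ∧ c ω ≤ q * c (update ω i true))
    (hZ : 0 < ∑ ω, tiltedWeight p c ω) (i : ι) :
    (1 - p) * tiltedProb p c (fun ω => ω i = true) ≤
        p * (1 - tiltedProb p c (fun ω => ω i = true)) ∧
      p * (1 - tiltedProb p c (fun ω => ω i = true)) ≤
        q * (1 - p) * tiltedProb p c (fun ω => ω i = true) := by
  have hT := tiltedProb_and_true_add_and_false p c (fun _ => True) i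
  simp only [true_and, tiltedProb_true hZ.ne'] at hT
  rw [← eq_sub_of_add_eq' hT]
  obtain ⟨h₁, h₂⟩ := tiltedMass_finite_energy hp0 hp1 hc i
  simp only [tiltedProb, ← mul_div_assoc]
  exact ⟨div_le_div_of_nonneg_right h₁ hZ.le, div_le_div_of_nonneg_right h₂ hZ.le⟩

theorem variance_comparison_of_finite_energy {π : ℝ} (hp0 : 0 < p) (hp1 : p < 1) (hq : 1 ≤ q)
    (h₁ : (1 - p) * π ≤ p * (1 - π)) (h₂ : p * (1 - π) ≤ q * (1 - p) * π) :
    0 < π ∧ π < 1 ∧ p * (1 - p) ≤ q * (π * (1 - π)) ∧ π * (1 - π) ≤ q * (p * (1 - p)) := by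
  have hq0 : 0 ≤ q := zero_le_one.trans hq
  have h1p : 0 ≤ 1 - p := (sub_pos.2 hp1).le
  have hπp : π ≤ p := by linarith
  have hπ0 : 0 < π := by
    by_contra! h
    nlinarith [mul_nonneg (mul_nonneg hq0 h1p) (neg_nonneg.2 h)]
  have h1π : 1 - π ≤ q * (1 - p) := by
    refine le_of_mul_le_mul_left ?_ hp0
    nlinarith [mul_le_mul_of_nonneg_left hπp (mul_nonneg hq0 h1p)]
  refine ⟨hπ0, hπp.trans_lt hp1, ?_, ?_⟩
  · nlinarith [mul_le_mul_of_nonneg_left (sub_le_sub_left hπp 1) (mul_nonneg hq0 hπ0.le),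
      mul_le_mul_of_nonneg_left (sub_le_sub_left hπp 1) hp0.le]
  · calc π * (1 - π) ≤ p * (q * (1 - p)) := mul_le_mul hπp h1π (by linarith) hp0.le
      _ = q * (p * (1 - p)) := by ring

theorem div_mem_Icc_of_le_mul {C v w : ℝ} (hC : 0 ≤ C) (hv : 0 < v) (hw : 0 < w)
    (hwv : w ≤ q * v) (hvw : v ≤ q * w) : C / w ∈ Set.Icc (q⁻¹ * (C / v)) (q * (C / v)) := by
  constructor
  · rw [inv_mul_eq_div, div_div, mul_comm]
    exact div_le_div_of_nonneg_left hC hw hwv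
  · rw [mul_div_assoc', div_le_div_iff₀ hw hv]
    nlinarith

theorem cov_div_mem_Icc_tiltedInfluence (hp0 : 0 < p) (hp1 : p < 1) (hq : 1 ≤ q)
    (hc0 : ∀ ω, 0 < c ω) (hc : ∀ ω η, c ω * c η ≤ c (ω ⊓ η) * c (ω ⊔ η))
    (hfe : ∀ ω i, c (update ω i true) ≤ c ω ∧ c ω ≤ q * c (update ω i true))
    (hP : Monotone P) (i : ι) :
    (tiltedProb p c (fun ω => P ω ∧ ω i = true) -
        tiltedProb p c P * tiltedProb p c (fun ω => ω i = true)) / (p * (1 - p)) ∈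
      Set.Icc (q⁻¹ * tiltedInfluence p c P i) (q * tiltedInfluence p c P i) := by
  have hZ := sum_tiltedWeight_pos hp0 hp1 hc0
  obtain ⟨h₁, h₂⟩ := tiltedProb_finite_energy hp0.le hp1.le hfe hZ i
  obtain ⟨hπ0, hπ1, hlow, hup⟩ := variance_comparison_of_finite_energy hp0 hp1 hq h₁ h₂
  have hopen : Monotone fun ω : ι → Bool => ω i = true := fun _ _ h hω =>
    Bool.le_iff_imp.mp (h i) hω
  have hcov := tiltedProb_mul_le_tiltedProb_and hp0.le hp1.le (fun ω => (hc0 ω).le) hc hP hopen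
  rw [tiltedInfluence_eq hZ.ne' i hπ0.ne' hπ1.ne]
  exact div_mem_Icc_of_le_mul (sub_nonneg.2 hcov) (mul_pos hπ0 (sub_pos.2 hπ1))
    (mul_pos hp0 (sub_pos.2 hp1)) hlow hup

end TiltedBernoulli

section RandomCluster

variable {V : Finset Vtx} {ξ : Vtx → Vtx → Prop} {χ χ' : Edge → Bool} {e : Edge} {u v : Vtx}

theorem adjV_comm {x y : Vtx} : adjV x y ↔ adjV y x := by
  simp only [adjV, abs_sub_comm]

instance stdSymm_rcStep [Std.Symm ξ] : Std.Symm (rcStep V ξ χ) where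
  symm x y := by
    rintro (⟨hx, hy, hxy, he⟩ | h)
    · exact .inl ⟨hy, hx, adjV_comm.1 hxy, Sym2.eq_swap ▸ he⟩
    · exact .inr (Std.Symm.symm _ _ h)

theorem rcStep_mono (h : χ ≤ χ') : rcStep V ξ χ ≤ rcStep V ξ χ' := by
  rintro x y (⟨hx, hy, hxy, he⟩ | hξ)
  exacts [.inl ⟨hx, hy, hxy, Bool.le_iff_imp.mp (h _) he⟩, .inr hξ]

theorem rcStep_update_of_adj (hu : u ∈ V) (hv : v ∈ V) (huv : adjV u v) (χ : Edge → Bool) :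
    rcStep V ξ (update χ s(u, v) true) = rcStep V ξ χ ⊔ link u v := by
  funext x y
  apply propext
  change _ ↔ rcStep V ξ χ x y ∨ link u v x y
  simp only [rcStep, link, update_apply, Sym2.eq_iff]
  by_cases hxy : x = u ∧ y = v ∨ x = v ∧ y = u
  · rcases hxy with ⟨rfl, rfl⟩ | ⟨rfl, rfl⟩ <;> simp [hu, hv, huv, adjV_comm.1 huv]
  · simp [hxy]

theorem exists_of_mem_edgeFinset (he : e ∈ edgeFinset V) :
    ∃ u v, u ∈ V ∧ v ∈ V ∧ adjV u v ∧ s(u, v) = e := by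
  obtain ⟨⟨u, v⟩, huv, rfl⟩ := Finset.mem_image.1 he
  simp only [Finset.mem_filter, Finset.mem_product] at huv
  exact ⟨u, v, huv.1.1, huv.1.2, huv.2, rfl⟩

theorem clusterCount_eq_classCount (V : Finset Vtx) (ξ : Vtx → Vtx → Prop) (χ : Edge → Bool) :
    clusterCount V ξ χ = classCount V (rcStep V ξ χ) := rfl

theorem clusterCount_update_le [Std.Symm ξ] (he : e ∈ edgeFinset V) (χ : Edge → Bool) :
    clusterCount V ξ (update χ e true) ≤ clusterCount V ξ χ ∧
      clusterCount V ξ χ ≤ clusterCount V ξ (update χ e true) + 1 := by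
  obtain ⟨u, v, hu, hv, huv, rfl⟩ := exists_of_mem_edgeFinset he
  simp only [clusterCount_eq_classCount, rcStep_update_of_adj hu hv huv]
  exact classCount_sup_link_le hu hv

theorem clusterCount_update_add_le [Std.Symm ξ] (hχ : χ ≤ χ') (he : e ∈ edgeFinset V) :
    clusterCount V ξ (update χ e true) + clusterCount V ξ χ' ≤
      clusterCount V ξ (update χ' e true) + clusterCount V ξ χ := by
  obtain ⟨u, v, hu, hv, huv, rfl⟩ := exists_of_mem_edgeFinset he
  simp only [clusterCount_eq_classCount, rcStep_update_of_adj hu hv huv]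
  exact classCount_sup_link_add_le (rcStep_mono hχ) hu hv

theorem extendConfig_of_mem {E : Finset Edge} (ω : {e // e ∈ E} → Bool) (he : e ∈ E) :
    extendConfig E ω e = ω ⟨e, he⟩ :=
  dif_pos he

theorem extendConfig_mono {E : Finset Edge} : Monotone (extendConfig E) := by
  intro ω η h f
  unfold extendConfig
  split_ifs
  exacts [h _, le_rfl]

theorem extendConfig_update {E : Finset Edge} (ω : {e // e ∈ E} → Bool) (i : {e // e ∈ E})
    (b : Bool) : extendConfig E (update ω i b) = update (extendConfig E ω) i b := by
  funext f
  by_cases hf : f = i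
  · subst hf
    simp [extendConfig_of_mem]
  · unfold extendConfig
    split_ifs with hfE
    · rw [update_of_ne (fun h => hf (congrArg Subtype.val h)), update_of_ne hf, dif_pos hfE]
    · rw [update_of_ne hf, dif_neg hfE]

theorem IncreasingEvent.monotone_comp_extendConfig {A : (Edge → Bool) → Prop}
    (hA : IncreasingEvent A) (E : Finset Edge) : Monotone fun ω => A (extendConfig E ω) :=
  fun _ _ h => hA _ _ fun f hf => Bool.le_iff_imp.mp (extendConfig_mono h f) hf

noncomputable def clusterWeight (V : Finset Vtx) (ξ : Vtx → Vtx → Prop) (q : ℝ)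
    (ω : {e // e ∈ edgeFinset V} → Bool) : ℝ :=
  q ^ clusterCount V ξ (extendConfig (edgeFinset V) ω)

theorem rcProb_eq_tiltedProb (V : Finset Vtx) (ξ : Vtx → Vtx → Prop) (p q : ℝ)
    (A : (Edge → Bool) → Prop) :
    rcProb V ξ p q A =
      tiltedProb p (clusterWeight V ξ q) fun ω => A (extendConfig (edgeFinset V) ω) :=
  rfl

theorem influence_eq_tiltedInfluence {p q : ℝ} {A : (Edge → Bool) → Prop}
    (he : e ∈ edgeFinset V) :
    influence V ξ p q A e = tiltedInfluence p (clusterWeight V ξ q)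
      (fun ω => A (extendConfig (edgeFinset V) ω)) ⟨e, he⟩ := by
  simp only [influence, tiltedInfluence, rcProb_eq_tiltedProb, extendConfig_of_mem _ he]

theorem clusterWeight_update [Std.Symm ξ] {q : ℝ} (hq : 1 ≤ q)
    (ω : {e // e ∈ edgeFinset V} → Bool) (i : {e // e ∈ edgeFinset V}) :
    clusterWeight V ξ q (update ω i true) ≤ clusterWeight V ξ q ω ∧
      clusterWeight V ξ q ω ≤ q * clusterWeight V ξ q (update ω i true) := by
  obtain ⟨h₁, h₂⟩ := clusterCount_update_le (ξ := ξ) i.2 (extendConfig (edgeFinset V) ω)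
  simp only [clusterWeight, extendConfig_update, ← pow_succ']
  exact ⟨pow_le_pow_right₀ hq h₁, pow_le_pow_right₀ hq h₂⟩

theorem clusterWeight_mul_le [Std.Symm ξ] {q : ℝ} (hq : 1 ≤ q)
    (ω η : {e // e ∈ edgeFinset V} → Bool) :
    clusterWeight V ξ q ω * clusterWeight V ξ q η ≤
      clusterWeight V ξ q (ω ⊓ η) * clusterWeight V ξ q (ω ⊔ η) := by
  simp only [clusterWeight, ← pow_add]
  refine pow_le_pow_right₀ hq ?_
  refine (add_le_sup_add_inf_of_update (f := fun ω => clusterCount V ξ (extendConfig _ ω))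
    (fun a b h i => ?_) ω η).trans_eq (add_comm _ _)
  simp only [extendConfig_update]
  exact clusterCount_update_add_le (extendConfig_mono h) i.2

end RandomCluster

/-- **Generalized Russo formula (Proposition 3.5).**  Let `q ≥ 1` and `ε > 0`.  For any
random-cluster measure `φ^ξ_{G,p,q}` with `p ∈ [ε, 1-ε]` and any increasing event `A`,
`(d/dp) φ^ξ_{G,p,q}(A) ≍ ∑_{e ∈ E} I_A^p(e)`, the constants depending only on `q` and
`ε`. -/
theorem rc_russo_influence_formula (q ε : ℝ) (hq : 1 ≤ q) (hε : 0 < ε) :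
    ∃ c : ℝ, 0 < c ∧
      ∀ (V : Finset Vtx) (ξ : Vtx → Vtx → Prop), IsBoundaryCondition V ξ →
        ∀ A : (Edge → Bool) → Prop, IncreasingEvent A →
          ∀ p : ℝ, ε ≤ p → p ≤ 1 - ε →
            ∃ D : ℝ, HasDerivAt (fun x : ℝ => rcProb V ξ x q A) D p ∧
              c * (∑ e ∈ edgeFinset V, influence V ξ p q A e) ≤ D ∧
              D ≤ c⁻¹ * (∑ e ∈ edgeFinset V, influence V ξ p q A e) := by
  refine ⟨q⁻¹, inv_pos.2 (zero_lt_one.trans_le hq), fun V ξ hξ A hA p hεp hpε => ?_⟩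
  have hp0 : 0 < p := hε.trans_le hεp
  have hp1 : p < 1 := by linarith
  have : Std.Symm ξ := ⟨fun _ _ h => hξ.1 h⟩
  have hc0 : ∀ ω, 0 < clusterWeight V ξ q ω := fun _ => pow_pos (zero_lt_one.trans_le hq) _
  have hterm := cov_div_mem_Icc_tiltedInfluence hp0 hp1 hq hc0 (clusterWeight_mul_le hq)
    (clusterWeight_update hq) (hA.monotone_comp_extendConfig (edgeFinset V))
  have hsum : ∑ e ∈ edgeFinset V, influence V ξ p q A e =
      ∑ i, tiltedInfluence p (clusterWeight V ξ q)
        (fun ω => A (extendConfig (edgeFinset V) ω)) i := by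
    rw [← Finset.sum_coe_sort]
    exact Finset.sum_congr rfl fun i _ => influence_eq_tiltedInfluence i.2
  refine ⟨_, hasDerivAt_tiltedProb hp0 hp1 hc0 _, ?_, ?_⟩
  · rw [hsum, Finset.mul_sum]
    exact Finset.sum_le_sum fun i _ => (hterm i).1
  · rw [hsum, inv_inv, Finset.mul_sum]
    exact Finset.sum_le_sum fun i _ => (hterm i).2
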